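/- arXiv:1303.1877 — 5 statements merged into one kernel-verified Lean document; each statement's English description precedes it below -/
import Mathlib

section
/- Let a, b, c > 0 be real numbers with a < b and c ≤ Γ(b)/Γ(a). Then the reciprocal of the function h_{a,b;c}(x) = (c·Γ(x+a)/Γ(x+b))^{1/x}, namely x ↦ (c·Γ(x+a)/Γ(x+b))^{−1/x}, is logarithmically completely monotonic on (0,∞); equivalently, for every integer k ≥ 1 and every x > 0, (−1)^k · (d^k/dx^k)[ln h_{a,b;c}(x)] ≤ 0. -/
/-!
Write `L(x) = (log Γ(x + b) - log Γ(x + a) - log c) / x`, so that the logarithm of the reciprocal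
of `h_{a,b;c}` is `L` and that of `h_{a,b;c}` is `-L`. By Gauss' product formula,
`L(x) = θ / x + ∑ₙ (g_{a+n}(x) - g_{b+n}(x))` with `θ = log (Γ(b) / (c Γ(a))) ≥ 0` and
`g_α(x) = log (1 + x / α) / x`. With `r = x / (x + α)`, the `k`-th derivative of `g_α` is
`(-1)^k k! x^{-(k+1)} (-log (1 - r) - ∑_{j<k} r^{j+1} / (j + 1))`; the bracket is increasing in `r`,
and `r` decreases in `α`, so every term of `(-1)^k L^{(k)}` is nonnegative. Differentiating the
series termwise is justified by the bound `k! (b - a) / (x^k (a + n)^2)`.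
-/

open Real Filter Set Topology
open scoped Nat

theorem eqOn_iteratedDeriv_of_hasDerivAt {𝕜 E : Type*} [NontriviallyNormedField 𝕜]
    [NormedAddCommGroup E] [NormedSpace 𝕜 E] {f : 𝕜 → E} {F : ℕ → 𝕜 → E} {s : Set 𝕜}
    (hs : IsOpen s) (h₀ : EqOn f (F 0) s)
    (hF : ∀ k, ∀ x ∈ s, HasDerivAt (F k) (F (k + 1) x) x) (k : ℕ) :
    EqOn (iteratedDeriv k f) (F k) s := by
  induction k with
  | zero => simpa using h₀
  | succ k ih =>
    intro x hx
    rw [iteratedDeriv_succ, (ih.eventuallyEq_of_mem (hs.mem_nhds hx)).deriv_eq,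
      (hF k x hx).deriv]

noncomputable def logTail (k : ℕ) (r : ℝ) : ℝ :=
  -log (1 - r) - ∑ j ∈ Finset.range k, r ^ (j + 1) / (j + 1)

lemma logTail_succ (k : ℕ) (r : ℝ) : logTail (k + 1) r = logTail k r - r ^ (k + 1) / (k + 1) := by
  simp only [logTail, Finset.sum_range_succ]
  ring

lemma hasDerivAt_logTail (k : ℕ) {r : ℝ} (hr : r < 1) :
    HasDerivAt (logTail k) (r ^ k / (1 - r)) r := by
  have h1r : 1 - r ≠ 0 := by linarith
  have hlog : HasDerivAt (fun r : ℝ => -log (1 - r)) (1 / (1 - r)) r := by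
    refine ((hasDerivAt_log h1r).comp r ((hasDerivAt_id r).const_sub 1)).neg.congr_deriv ?_
    simp
  have hsum : HasDerivAt (fun r : ℝ => ∑ j ∈ Finset.range k, r ^ (j + 1) / (j + 1))
      (∑ j ∈ Finset.range k, r ^ j) r := by
    refine (HasDerivAt.fun_sum (u := Finset.range k)
      fun j _ => (hasDerivAt_pow (j + 1) r).div_const ((j : ℝ) + 1)).congr_deriv
        (Finset.sum_congr rfl fun j _ => ?_)
    push_cast
    field_simp
  refine (hlog.sub hsum).congr_deriv ?_
  have hr1 : r - 1 ≠ 0 := by linarith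
  rw [geom_sum_eq (by linarith : r ≠ 1)]
  field_simp
  ring

lemma logTail_sub_bounds (k : ℕ) {t s : ℝ} (ht : 0 ≤ t) (hts : t ≤ s) (hs : s < 1) :
    0 ≤ logTail k s - logTail k t ∧ logTail k s - logTail k t ≤ (s - t) / (1 - s) := by
  have hderiv : ∀ r ∈ Icc t s, HasDerivAt (logTail k) (r ^ k / (1 - r)) r :=
    fun r hr => hasDerivAt_logTail k (hr.2.trans_lt hs)
  have hcont : ContinuousOn (logTail k) (Icc t s) :=
    fun r hr => (hderiv r hr).continuousAt.continuousWithinAt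
  have hdiff : DifferentiableOn ℝ (logTail k) (interior (Icc t s)) :=
    fun r hr => (hderiv r (interior_subset hr)).differentiableAt.differentiableWithinAt
  have hbounds : ∀ r ∈ interior (Icc t s), 0 ≤ deriv (logTail k) r ∧
      deriv (logTail k) r ≤ 1 / (1 - s) := by
    intro r hr
    obtain ⟨htr, hrs⟩ := interior_subset hr
    rw [(hderiv r ⟨htr, hrs⟩).deriv]
    have hr0 : 0 ≤ r := ht.trans htr
    have h1r : 0 < 1 - r := by linarith
    exact ⟨by positivity,
      div_le_div₀ zero_le_one (pow_le_one₀ hr0 (by linarith)) (by linarith) (by linarith)⟩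
  have hlow := (convex_Icc t s).mul_sub_le_image_sub_of_le_deriv hcont hdiff
    (fun r hr => (hbounds r hr).1) t ⟨le_rfl, hts⟩ s ⟨hts, le_rfl⟩ hts
  have hupp := (convex_Icc t s).image_sub_le_mul_sub_of_deriv_le hcont hdiff
    (fun r hr => (hbounds r hr).2) t ⟨le_rfl, hts⟩ s ⟨hts, le_rfl⟩ hts
  constructor
  · linarith
  · rwa [one_div_mul_eq_div] at hupp

/-- The `k`-th derivative of `x ↦ (log (x + α) - log α) / x`. -/
noncomputable def slopeLogDeriv (k : ℕ) (α x : ℝ) : ℝ :=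
  (-1) ^ k * k ! / x ^ (k + 1) * logTail k (x / (x + α))

lemma slopeLogDeriv_zero {α x : ℝ} (hα : 0 < α) (hx : 0 < x) :
    slopeLogDeriv 0 α x = (log (x + α) - log α) / x := by
  have hxα : 0 < x + α := by linarith
  rw [slopeLogDeriv, logTail, show 1 - x / (x + α) = α / (x + α) by field_simp; ring,
    log_div hα.ne' hxα.ne']
  simp
  ring

lemma hasDerivAt_slopeLogDeriv (k : ℕ) {α x : ℝ} (hα : 0 < α) (hx : 0 < x) :
    HasDerivAt (slopeLogDeriv k α) (slopeLogDeriv (k + 1) α x) x := by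
  have hxα : 0 < x + α := by linarith
  have hratio : HasDerivAt (fun y : ℝ => y / (y + α)) (α / (x + α) ^ 2) x := by
    refine ((hasDerivAt_id x).div ((hasDerivAt_id x).add_const α) hxα.ne').congr_deriv ?_
    simp only [id_eq]
    ring
  have htail : HasDerivAt (fun y => logTail k (y / (y + α)))
      ((x / (x + α)) ^ k / (1 - x / (x + α)) * (α / (x + α) ^ 2)) x :=
    HasDerivAt.comp (h₂ := logTail k) x (hasDerivAt_logTail k ((div_lt_one hxα).mpr (by linarith)))
      hratio
  have hpow : HasDerivAt (fun y : ℝ => (-1) ^ k * (k ! : ℝ) / y ^ (k + 1))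
      ((-1) ^ k * k ! * -((k + 1) * x ^ k / (x ^ (k + 1)) ^ 2)) x := by
    refine (((hasDerivAt_pow (k + 1) x).inv (pow_ne_zero _ hx.ne')).const_mul
      ((-1 : ℝ) ^ k * k !)).congr_deriv ?_
    push_cast
    ring
  refine (hpow.mul htail).congr_deriv ?_
  rw [slopeLogDeriv, logTail_succ, pow_succ (-1 : ℝ), Nat.factorial_succ,
    show 1 - x / (x + α) = α / (x + α) by field_simp; ring]
  generalize logTail k (x / (x + α)) = L
  push_cast
  simp only [div_pow]
  field_simp
  ring

lemma neg_one_pow_mul_sub_slopeLogDeriv (k : ℕ) (α β x : ℝ) :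
    (-1) ^ k * (slopeLogDeriv k α x - slopeLogDeriv k β x) =
      k ! / x ^ (k + 1) * (logTail k (x / (x + α)) - logTail k (x / (x + β))) := by
  have hsq : ((-1 : ℝ) ^ k) ^ 2 = 1 := by rw [← pow_mul, mul_comm, pow_mul, neg_one_sq, one_pow]
  simp only [slopeLogDeriv]
  linear_combination (k ! / x ^ (k + 1) * (logTail k (x / (x + α)) - logTail k (x / (x + β)))) * hsq

lemma sub_slopeLogDeriv_bounds (k : ℕ) {α β x : ℝ} (hα : 0 < α) (hαβ : α ≤ β) (hx : 0 < x) :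
    0 ≤ (-1) ^ k * (slopeLogDeriv k α x - slopeLogDeriv k β x) ∧
      (-1) ^ k * (slopeLogDeriv k α x - slopeLogDeriv k β x) ≤ k ! * (β - α) / (x ^ k * α ^ 2) := by
  have hxα : 0 < x + α := by linarith
  have hxβ : 0 < x + β := by linarith
  obtain ⟨hlow, hupp⟩ := logTail_sub_bounds k (t := x / (x + β)) (s := x / (x + α))
    (by positivity) (by gcongr) ((div_lt_one hxα).mpr (by linarith))
  have hcoef : (0 : ℝ) ≤ k ! / x ^ (k + 1) := by positivity
  rw [neg_one_pow_mul_sub_slopeLogDeriv]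
  refine ⟨mul_nonneg hcoef hlow, ?_⟩
  have hquot : (x / (x + α) - x / (x + β)) / (1 - x / (x + α)) = x * (β - α) / (α * (x + β)) := by
    field_simp [hα.ne']
    ring
  have hαxβ : α * α ≤ α * (x + β) := by gcongr; linarith
  calc (k ! / x ^ (k + 1)) * (logTail k (x / (x + α)) - logTail k (x / (x + β)))
      ≤ k ! / x ^ (k + 1) * (x * (β - α) / (α * α)) := by
        rw [hquot] at hupp
        exact mul_le_mul_of_nonneg_left
          (hupp.trans (div_le_div_of_nonneg_left (by nlinarith) (by positivity) hαxβ)) hcoef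
    _ = k ! * (β - α) / (x ^ k * α ^ 2) := by
        field_simp
        ring

lemma summable_inv_add_nat_sq {a : ℝ} (ha : 0 < a) : Summable fun n : ℕ => ((a + n) ^ 2)⁻¹ := by
  refine ((summable_one_div_nat_add_rpow a 2).mpr one_lt_two).congr fun n => ?_
  rw [abs_of_pos (by positivity), rpow_two, add_comm, one_div]

section LogGammaQuot

variable {a b : ℝ}

lemma abs_sub_slopeLogDeriv_le (k : ℕ) (ha : 0 < a) (hab : a ≤ b) {x : ℝ} (hx : 0 < x) (n : ℕ) :
    |slopeLogDeriv k (a + n) x - slopeLogDeriv k (b + n) x| ≤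
      k ! * (b - a) / (x ^ k * (a + n) ^ 2) := by
  obtain ⟨hnonneg, hle⟩ := sub_slopeLogDeriv_bounds k (by positivity : 0 < a + n)
    (by linarith : a + n ≤ b + n) hx
  calc |slopeLogDeriv k (a + n) x - slopeLogDeriv k (b + n) x|
      = (-1) ^ k * (slopeLogDeriv k (a + n) x - slopeLogDeriv k (b + n) x) := by
        rw [← abs_of_nonneg hnonneg, abs_mul, abs_neg_one_pow, one_mul]
    _ ≤ k ! * (b - a) / (x ^ k * (a + n) ^ 2) := by rwa [add_sub_add_right_eq_sub] at hle

lemma summable_sub_slopeLogDeriv (k : ℕ) (ha : 0 < a) (hab : a ≤ b) {x : ℝ} (hx : 0 < x) :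
    Summable fun n : ℕ => slopeLogDeriv k (a + n) x - slopeLogDeriv k (b + n) x :=
  .of_norm_bounded ((summable_inv_add_nat_sq ha).mul_left (k ! * (b - a) / x ^ k)) fun n => by
    rw [norm_eq_abs]
    convert abs_sub_slopeLogDeriv_le k ha hab hx n using 1
    field_simp

lemma hasSum_sub_slopeLogDeriv_zero (ha : 0 < a) (hab : a ≤ b) {x : ℝ} (hx : 0 < x) :
    HasSum (fun n : ℕ => slopeLogDeriv 0 (a + n) x - slopeLogDeriv 0 (b + n) x)
      ((log (Gamma (x + b)) - log (Gamma (x + a)) - (log (Gamma b) - log (Gamma a))) / x) := by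
  have hb : 0 < b := ha.trans_le hab
  rw [hasSum_iff_tendsto_nat_of_nonneg fun n => by
    simpa using (sub_slopeLogDeriv_bounds 0 (by positivity : 0 < a + n)
      (by linarith : a + n ≤ b + n) hx).1]
  have hterm : ∀ n : ℕ, slopeLogDeriv 0 (a + n) x - slopeLogDeriv 0 (b + n) x =
      (log (x + a + n) - log (a + n) - (log (x + b + n) - log (b + n))) / x := fun n => by
    rw [slopeLogDeriv_zero (by positivity) hx, slopeLogDeriv_zero (by positivity) hx,
      ← add_assoc, ← add_assoc]
    ring
  have hpartial : ∀ N : ℕ,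
      ∑ n ∈ Finset.range (N + 1), (slopeLogDeriv 0 (a + n) x - slopeLogDeriv 0 (b + n) x) =
        (BohrMollerup.logGammaSeq a N - BohrMollerup.logGammaSeq (x + a) N -
          (BohrMollerup.logGammaSeq b N - BohrMollerup.logGammaSeq (x + b) N)) / x := fun N => by
    simp only [hterm, ← Finset.sum_div, Finset.sum_sub_distrib, BohrMollerup.logGammaSeq]
    ring
  have hlim := (((BohrMollerup.tendsto_log_gamma ha).sub
    (BohrMollerup.tendsto_log_gamma (by positivity : 0 < x + a))).sub
    ((BohrMollerup.tendsto_log_gamma hb).sub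
      (BohrMollerup.tendsto_log_gamma (by positivity : 0 < x + b)))).div_const x
  refine (tendsto_add_atTop_iff_nat 1).mp ?_
  simp only [hpartial]
  convert hlim using 2
  ring

variable (a b) in
/-- The `k`-th derivative of `x ↦ (θ + log Γ(x + b) - log Γ(x + a) - (log Γ(b) - log Γ(a))) / x`,
obtained by expanding the log-Gamma differences into the series `hasSum_sub_slopeLogDeriv_zero`. -/
noncomputable def logGammaQuotDeriv (θ : ℝ) (k : ℕ) (x : ℝ) : ℝ :=
  (-1) ^ k * k ! * θ / x ^ (k + 1) +
    ∑' n : ℕ, (slopeLogDeriv k (a + n) x - slopeLogDeriv k (b + n) x)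

lemma logGammaQuotDeriv_zero (θ : ℝ) (ha : 0 < a) (hab : a ≤ b) {x : ℝ} (hx : 0 < x) :
    logGammaQuotDeriv a b θ 0 x =
      (θ + (log (Gamma (x + b)) - log (Gamma (x + a)) - (log (Gamma b) - log (Gamma a)))) / x := by
  rw [logGammaQuotDeriv, (hasSum_sub_slopeLogDeriv_zero ha hab hx).tsum_eq]
  simp only [pow_zero, Nat.factorial_zero, Nat.cast_one, zero_add, pow_one]
  ring

lemma hasDerivAt_logGammaQuotDeriv (θ : ℝ) (k : ℕ) (ha : 0 < a) (hab : a ≤ b) {x : ℝ}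
    (hx : 0 < x) :
    HasDerivAt (logGammaQuotDeriv a b θ k) (logGammaQuotDeriv a b θ (k + 1) x) x := by
  have hb : 0 < b := ha.trans_le hab
  have hmain : HasDerivAt (fun y : ℝ => (-1) ^ k * k ! * θ / y ^ (k + 1))
      ((-1) ^ (k + 1) * (k + 1)! * θ / x ^ (k + 2)) x := by
    refine (((hasDerivAt_pow (k + 1) x).inv (pow_ne_zero _ hx.ne')).const_mul
      ((-1 : ℝ) ^ k * k ! * θ)).congr_deriv ?_
    rw [pow_succ (-1 : ℝ), Nat.factorial_succ]
    push_cast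
    field_simp
    ring
  have hseries : HasDerivAt
      (fun y => ∑' n : ℕ, (slopeLogDeriv k (a + n) y - slopeLogDeriv k (b + n) y))
      (∑' n : ℕ, (slopeLogDeriv (k + 1) (a + n) x - slopeLogDeriv (k + 1) (b + n) x)) x := by
    have hx2 : x ∈ Ioi (x / 2) := by simp only [mem_Ioi]; linarith
    refine hasDerivAt_tsum_of_isPreconnected
      (g := fun (n : ℕ) y => slopeLogDeriv k (a + n) y - slopeLogDeriv k (b + n) y)
      (g' := fun (n : ℕ) y => slopeLogDeriv (k + 1) (a + n) y - slopeLogDeriv (k + 1) (b + n) y)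
      ((summable_inv_add_nat_sq ha).mul_left ((k + 1)! * (b - a) / (x / 2) ^ (k + 1)))
      isOpen_Ioi isPreconnected_Ioi (fun n y hy => ?_) (fun n y hy => ?_) hx2
      (summable_sub_slopeLogDeriv k ha hab hx) hx2
    · have hy0 : 0 < y := (half_pos hx).trans hy
      exact (hasDerivAt_slopeLogDeriv k (by positivity) hy0).sub
        (hasDerivAt_slopeLogDeriv k (by positivity) hy0)
    · have hy0 : 0 < y := (half_pos hx).trans hy
      calc ‖slopeLogDeriv (k + 1) (a + n) y - slopeLogDeriv (k + 1) (b + n) y‖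
          ≤ (k + 1)! * (b - a) / (y ^ (k + 1) * (a + n) ^ 2) :=
            (norm_eq_abs _).trans_le (abs_sub_slopeLogDeriv_le (k + 1) ha hab hy0 n)
        _ = (k + 1)! * (b - a) / y ^ (k + 1) * ((a + n) ^ 2)⁻¹ := by
            rw [← div_div, div_eq_mul_inv]
        _ ≤ (k + 1)! * (b - a) / (x / 2) ^ (k + 1) * ((a + n) ^ 2)⁻¹ := by
            gcongr
            exact le_of_lt hy
  exact hmain.add hseries

lemma neg_one_pow_mul_logGammaQuotDeriv_nonneg {θ : ℝ} (hθ : 0 ≤ θ) (k : ℕ) (ha : 0 < a)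
    (hab : a ≤ b) {x : ℝ} (hx : 0 < x) : 0 ≤ (-1) ^ k * logGammaQuotDeriv a b θ k x := by
  have hsq : ((-1 : ℝ) ^ k) ^ 2 = 1 := by rw [← pow_mul, mul_comm, pow_mul, neg_one_sq, one_pow]
  have hmain : (-1) ^ k * ((-1) ^ k * k ! * θ / x ^ (k + 1)) = k ! * θ / x ^ (k + 1) := by
    linear_combination (k ! * θ / x ^ (k + 1)) * hsq
  rw [logGammaQuotDeriv, mul_add, hmain, ← tsum_mul_left]
  exact add_nonneg (by positivity) (tsum_nonneg fun n =>
    (sub_slopeLogDeriv_bounds k (by positivity) (by linarith : a + n ≤ b + n) hx).1)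

end LogGammaQuot

lemma log_rpow_mul_Gamma_div_Gamma {a b c y : ℝ} (hc : 0 < c) (hya : 0 < y + a) (hyb : 0 < y + b)
    (t : ℝ) : log ((c * Gamma (y + a) / Gamma (y + b)) ^ t) =
      -t * (log (Gamma (y + b)) - log (Gamma (y + a)) - log c) := by
  have hΓa := Gamma_pos_of_pos hya
  have hΓb := Gamma_pos_of_pos hyb
  rw [log_rpow (by positivity), log_div (by positivity) hΓb.ne', log_mul hc.ne' hΓa.ne']
  ring

theorem stmt_1_general (a b c : ℝ) (ha : 0 < a) (hc : 0 < c)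
    (hab : a < b) (hcle : c ≤ Real.Gamma b / Real.Gamma a) :
    (∀ k : ℕ, 1 ≤ k → ∀ x : ℝ, 0 < x →
      0 ≤ (-1 : ℝ) ^ k *
        iteratedDeriv k
          (fun y : ℝ => Real.log ((c * Real.Gamma (y + a) / Real.Gamma (y + b)) ^ (-(1 / y)))) x) ∧
    (∀ k : ℕ, 1 ≤ k → ∀ x : ℝ, 0 < x →
      (-1 : ℝ) ^ k *
        iteratedDeriv k
          (fun y : ℝ => Real.log ((c * Real.Gamma (y + a) / Real.Gamma (y + b)) ^ (1 / y))) x ≤ 0) := by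
  set θ := log (Gamma b) - log (Gamma a) - log c with hθdef
  have hθ : 0 ≤ θ := by
    have := log_le_log hc hcle
    rw [log_div (Gamma_pos_of_pos (ha.trans hab)).ne' (Gamma_pos_of_pos ha).ne'] at this
    linarith
  have hlog : ∀ t : ℝ, ∀ y ∈ Ioi (0 : ℝ),
      log ((c * Gamma (y + a) / Gamma (y + b)) ^ t) = -(t * y) * logGammaQuotDeriv a b θ 0 y := by
    intro t y (hy : 0 < y)
    rw [log_rpow_mul_Gamma_div_Gamma hc (by linarith) (by linarith),
      logGammaQuotDeriv_zero _ ha hab.le hy, hθdef]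
    field_simp
    ring
  have hderiv := fun k x (hx : x ∈ Ioi (0 : ℝ)) => hasDerivAt_logGammaQuotDeriv θ k ha hab.le hx
  have hrecip : ∀ k, EqOn
      (iteratedDeriv k fun y => log ((c * Gamma (y + a) / Gamma (y + b)) ^ (-(1 / y))))
      (logGammaQuotDeriv a b θ k) (Ioi 0) :=
    eqOn_iteratedDeriv_of_hasDerivAt isOpen_Ioi
      (fun y hy => by rw [hlog _ y hy]; field_simp [(show (0 : ℝ) < y from hy).ne']) hderiv
  have hfun : ∀ k, EqOn
      (iteratedDeriv k fun y => log ((c * Gamma (y + a) / Gamma (y + b)) ^ (1 / y)))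
      (fun y => -logGammaQuotDeriv a b θ k y) (Ioi 0) :=
    eqOn_iteratedDeriv_of_hasDerivAt isOpen_Ioi
      (fun y hy => by rw [hlog _ y hy]; field_simp [(show (0 : ℝ) < y from hy).ne'])
      fun k x hx => (hderiv k x hx).neg
  refine ⟨fun k _ x hx => ?_, fun k _ x hx => ?_⟩
  · rw [hrecip k hx]
    exact neg_one_pow_mul_logGammaQuotDeriv_nonneg hθ k ha hab.le hx
  · rw [hfun k hx, mul_neg, neg_nonpos]
    exact neg_one_pow_mul_logGammaQuotDeriv_nonneg hθ k ha hab.le hx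

theorem stmt_1 (a b c : ℝ) (ha : 0 < a) (hb : 0 < b) (hc : 0 < c)
    (hab : a < b) (hcle : c ≤ Real.Gamma b / Real.Gamma a) :
    (∀ k : ℕ, 1 ≤ k → ∀ x : ℝ, 0 < x →
      0 ≤ (-1 : ℝ) ^ k *
        iteratedDeriv k
          (fun y : ℝ => Real.log ((c * Real.Gamma (y + a) / Real.Gamma (y + b)) ^ (-(1 / y)))) x) ∧
    (∀ k : ℕ, 1 ≤ k → ∀ x : ℝ, 0 < x →
      (-1 : ℝ) ^ k *
        iteratedDeriv k
          (fun y : ℝ => Real.log ((c * Real.Gamma (y + a) / Real.Gamma (y + b)) ^ (1 / y))) x ≤ 0) :=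
  stmt_1_general a b c ha hc hab hcle
end

section
/- The function h(x) = (2√π)^{1/x} [Γ(x+1)]^{1/x} / [Γ(x+1/2)]^{1/x} = (2√π · Γ(x+1)/Γ(x+1/2))^{1/x} is logarithmically completely monotonic on (0,∞); that is, for every integer k ≥ 1 and every x > 0, (−1)^k · (d^k/dx^k)[ln h(x)] ≥ 0. -/
open Real Filter Set Topology

/-!
Write `J k c x = ∫₀¹ sᵏ / (s x + c)ᵏ⁺¹ ds` (`momentIntegral`). Since `log (1 + x / c) = x J₀(c, x)`,
Gauss's limit formula for `Γ` gives `log h(x) = log 2 / x + ∑ₙ (J₀(n + 1/2, x) − J₀(n + 1, x))`.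
Differentiating under the integral sign, `∂ₓ J_k = −(k + 1) J_{k+1}`, hence
`(−1)ᵏ (log h)⁽ᵏ⁾(x) = k! (log 2 / xᵏ⁺¹ + ∑ₙ (J_k(n + 1/2, x) − J_k(n + 1, x)))`, and every term is
nonnegative because `J_k(c, x)` decreases in `c`. The bound
`J_k(a, x) − J_k(b, x) ≤ (k + 1)(b − a)/aᵏ⁺²`, uniform in `x`, justifies differentiating the series
termwise.
-/

section IteratedDeriv

variable {𝕜 E : Type*} [NontriviallyNormedField 𝕜] [NormedAddCommGroup E] [NormedSpace 𝕜 E]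

theorem iteratedDeriv_eqOn_of_hasDerivAt {U : Set 𝕜} (hU : IsOpen U) {f : 𝕜 → E}
    {F : ℕ → 𝕜 → E} (h₀ : EqOn f (F 0) U)
    (hF : ∀ k, ∀ x ∈ U, HasDerivAt (F k) (F (k + 1) x) x) (k : ℕ) :
    EqOn (iteratedDeriv k f) (F k) U := by
  induction k with
  | zero => simpa using h₀
  | succ k ih =>
    intro x hx
    rw [iteratedDeriv_succ, (ih.eventuallyEq_of_mem (hU.mem_nhds hx)).deriv_eq]
    exact (hF k x hx).deriv

end IteratedDeriv

lemma one_div_pow_sub_one_div_pow_le (m : ℕ) {a b : ℝ} (ha : 0 < a) (hab : a ≤ b) :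
    1 / a ^ (m + 1) - 1 / b ^ (m + 1) ≤ (m + 1) * (b - a) / a ^ (m + 2) := by
  have hb : 0 < b := ha.trans_le hab
  have hinv : 1 / b ≤ 1 / a := one_div_le_one_div_of_le ha hab
  have h := abs_pow_sub_pow_le (1 / a) (1 / b) (m + 1)
  rw [Nat.add_sub_cancel, abs_of_pos (by positivity : 0 < 1 / a),
    abs_of_pos (by positivity : 0 < 1 / b), max_eq_left hinv, abs_of_nonneg (sub_nonneg.2 hinv),
    abs_of_nonneg (sub_nonneg.2 (pow_le_pow_left₀ (by positivity) hinv _))] at h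
  calc 1 / a ^ (m + 1) - 1 / b ^ (m + 1) = (1 / a) ^ (m + 1) - (1 / b) ^ (m + 1) := by
        rw [one_div_pow, one_div_pow]
    _ ≤ (1 / a - 1 / b) * (m + 1 : ℕ) * (1 / a) ^ m := h
    _ ≤ (b - a) / a ^ 2 * (m + 1 : ℕ) * (1 / a) ^ m := by
        gcongr
        rw [div_sub_div _ _ ha.ne' hb.ne', one_mul, mul_one, sq]
        gcongr
    _ = (m + 1) * (b - a) / a ^ (m + 2) := by
        rw [one_div_pow]
        push_cast
        field_simp
        ring

noncomputable def momentIntegral (k : ℕ) (c x : ℝ) : ℝ :=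
  ∫ s in (0 : ℝ)..1, s ^ k / (s * x + c) ^ (k + 1)

section MomentIntegral

variable {a b c x : ℝ}

lemma intervalIntegrable_momentIntegrand (k : ℕ) (hc : 0 < c) (hx : 0 ≤ x) :
    IntervalIntegrable (fun s : ℝ => s ^ k / (s * x + c) ^ (k + 1)) MeasureTheory.volume 0 1 := by
  refine ContinuousOn.intervalIntegrable (.div (by fun_prop) (by fun_prop) fun s hs => ?_)
  rw [uIcc_of_le zero_le_one] at hs
  have := hs.1
  positivity

lemma momentIntegral_anti (k : ℕ) (ha : 0 < a) (hab : a ≤ b) (hx : 0 ≤ x) :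
    momentIntegral k b x ≤ momentIntegral k a x :=
  intervalIntegral.integral_mono_on zero_le_one
    (intervalIntegrable_momentIntegrand k (ha.trans_le hab) hx)
    (intervalIntegrable_momentIntegrand k ha hx) fun s ⟨hs, _⟩ => by gcongr

lemma momentIntegral_sub_le (k : ℕ) (ha : 0 < a) (hab : a ≤ b) (hx : 0 ≤ x) :
    momentIntegral k a x - momentIntegral k b x ≤ (k + 1) * (b - a) / a ^ (k + 2) := by
  rw [momentIntegral, momentIntegral, ← intervalIntegral.integral_sub
    (intervalIntegrable_momentIntegrand k ha hx)
    (intervalIntegrable_momentIntegrand k (ha.trans_le hab) hx)]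
  refine le_of_le_of_eq (b := ∫ _ in (0 : ℝ)..1, (k + 1) * (b - a) / a ^ (k + 2))
    (intervalIntegral.integral_mono_on zero_le_one
      ((intervalIntegrable_momentIntegrand k ha hx).sub
        (intervalIntegrable_momentIntegrand k (ha.trans_le hab) hx))
      intervalIntegrable_const fun s ⟨hs₀, hs₁⟩ => ?_) (by simp)
  have hsa : 0 < s * x + a := by positivity
  calc s ^ k / (s * x + a) ^ (k + 1) - s ^ k / (s * x + b) ^ (k + 1)
      = s ^ k * (1 / (s * x + a) ^ (k + 1) - 1 / (s * x + b) ^ (k + 1)) := by ring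
    _ ≤ 1 * ((k + 1) * ((s * x + b) - (s * x + a)) / (s * x + a) ^ (k + 2)) :=
        mul_le_mul (pow_le_one₀ hs₀ hs₁)
          (one_div_pow_sub_one_div_pow_le k hsa (by linarith))
          (sub_nonneg.2 (by gcongr)) zero_le_one
    _ ≤ (k + 1) * (b - a) / a ^ (k + 2) := by
        rw [one_mul, add_sub_add_left_eq_sub]
        gcongr
        exact le_add_of_nonneg_left (by positivity)

lemma mul_momentIntegral_zero (hc : 0 < c) (hx : 0 < x) :
    x * momentIntegral 0 c x = log (x + c) - log c := by
  have hderiv : ∀ s ∈ uIcc (0 : ℝ) 1,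
      HasDerivAt (fun s => log (s * x + c)) (x * (s ^ 0 / (s * x + c) ^ (0 + 1))) s := by
    intro s hs
    rw [uIcc_of_le zero_le_one] at hs
    have := hs.1
    have hpos : 0 < s * x + c := by positivity
    convert ((hasDerivAt_mul_const x).add_const c).log hpos.ne' using 1
    rw [zero_add, pow_one, pow_zero]
    field_simp
  rw [momentIntegral, ← intervalIntegral.integral_const_mul,
    intervalIntegral.integral_eq_sub_of_hasDerivAt hderiv
      ((intervalIntegrable_momentIntegrand 0 hc hx.le).const_mul x)]
  simp

lemma hasDerivAt_momentIntegrand (k : ℕ) {s : ℝ} (h : 0 < s * x + c) :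
    HasDerivAt (fun y => s ^ k / (s * y + c) ^ (k + 1))
      (-((k + 1) * (s ^ (k + 1) / (s * x + c) ^ (k + 2)))) x := by
  have hlin : HasDerivAt (fun y => s * y + c) s x := (hasDerivAt_const_mul s).add_const c
  refine ((hasDerivAt_const x (s ^ k)).div (hlin.pow (k + 1)) (pow_ne_zero _ h.ne')).congr_deriv ?_
  simp only [Pi.pow_apply, Nat.add_sub_cancel]
  field_simp
  push_cast
  ring

lemma hasDerivAt_momentIntegral (k : ℕ) (hc : 0 < c) (hx : 0 < x) :
    HasDerivAt (momentIntegral k c) (-((k + 1) * momentIntegral (k + 1) c x)) x := by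
  have hparam := intervalIntegral.hasDerivAt_integral_of_dominated_loc_of_deriv_le
    (F := fun y s => s ^ k / (s * y + c) ^ (k + 1))
    (F' := fun y s => -((k + 1) * (s ^ (k + 1) / (s * y + c) ^ (k + 2))))
    (bound := fun _ => (k + 1) * (1 / c ^ (k + 2))) (Ioi_mem_nhds hx)
    (.of_forall fun y => (by fun_prop : Measurable _).aestronglyMeasurable)
    (intervalIntegrable_momentIntegrand k hc hx.le)
    (by fun_prop : Measurable _).aestronglyMeasurable
    (.of_forall fun s hs y (hy : 0 < y) => ?_) intervalIntegrable_const
    (.of_forall fun s hs y (hy : 0 < y) => ?_)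
  · have hderiv := hparam.2
    rw [intervalIntegral.integral_neg, intervalIntegral.integral_const_mul] at hderiv
    exact hderiv
  · rw [uIoc_of_le zero_le_one] at hs
    have hs₀ := hs.1.le
    rw [norm_neg, Real.norm_of_nonneg (by positivity)]
    gcongr
    · exact pow_le_one₀ hs₀ hs.2
    · exact le_add_of_nonneg_left (by positivity)
  · rw [uIoc_of_le zero_le_one] at hs
    have := hs.1.le
    exact hasDerivAt_momentIntegrand k (by positivity)

end MomentIntegral

lemma summable_one_div_nat_add_pow {a : ℝ} (ha : 0 < a) {m : ℕ} (hm : 1 < m) :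
    Summable (fun n : ℕ => 1 / ((n : ℝ) + a) ^ m) :=
  ((Real.summable_one_div_nat_add_rpow a m).2 (by exact_mod_cast hm)).congr fun n => by
    rw [abs_of_pos (by positivity), Real.rpow_natCast]

lemma tendsto_sum_log_sub_log_Gamma {x a b : ℝ} (ha : 0 < a) (hb : 0 < b) (hxa : 0 < x + a)
    (hxb : 0 < x + b) :
    Tendsto (fun N => ∑ n ∈ Finset.range N,
        ((log (x + (n + a)) - log (n + a)) - (log (x + (n + b)) - log (n + b)))) atTop
      (𝓝 (log (Gamma (x + b)) - log (Gamma b) - (log (Gamma (x + a)) - log (Gamma a)))) := by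
  rw [← tendsto_add_atTop_iff_nat 1]
  refine (((BohrMollerup.tendsto_log_gamma hxb).sub (BohrMollerup.tendsto_log_gamma hb)).sub
    ((BohrMollerup.tendsto_log_gamma hxa).sub (BohrMollerup.tendsto_log_gamma ha))).congr
    fun N => ?_
  -- the `x * log N` terms of the four Gauss sequences cancel
  simp only [BohrMollerup.logGammaSeq, Finset.sum_sub_distrib]
  ring_nf

noncomputable def momentGap (k n : ℕ) (x : ℝ) : ℝ :=
  momentIntegral k (n + 1 / 2) x - momentIntegral k (n + 1) x

section MomentGap

variable {x : ℝ}

lemma momentGap_nonneg (k n : ℕ) (hx : 0 ≤ x) : 0 ≤ momentGap k n x :=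
  sub_nonneg.2 (momentIntegral_anti k (by positivity) (by linarith) hx)

lemma momentGap_le (k n : ℕ) (hx : 0 ≤ x) :
    momentGap k n x ≤ (k + 1) / 2 * (1 / ((n : ℝ) + 1 / 2) ^ (k + 2)) :=
  (momentIntegral_sub_le k (by positivity) (by linarith) hx).trans_eq (by ring)

lemma summable_momentGap (k : ℕ) (hx : 0 ≤ x) : Summable (fun n => momentGap k n x) :=
  ((summable_one_div_nat_add_pow one_half_pos (by omega : 1 < k + 2)).mul_left _).of_nonneg_of_le
    (fun n => momentGap_nonneg k n hx) (fun n => momentGap_le k n hx)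

lemma hasDerivAt_momentGap (k n : ℕ) (hx : 0 < x) :
    HasDerivAt (momentGap k n) (-((k + 1) * momentGap (k + 1) n x)) x :=
  ((hasDerivAt_momentIntegral k (by positivity) hx).sub
    (hasDerivAt_momentIntegral k (by positivity) hx)).congr_deriv (by rw [momentGap]; ring)

lemma hasSum_momentGap_zero (hx : 0 < x) :
    HasSum (fun n => momentGap 0 n x) (log (√π * Gamma (x + 1) / Gamma (x + 1 / 2)) / x) := by
  rw [← hasSum_mul_left_iff hx.ne', mul_div_cancel₀ _ hx.ne',
    ((summable_momentGap 0 hx.le).mul_left x).hasSum_iff_tendsto_nat]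
  convert tendsto_sum_log_sub_log_Gamma (x := x) one_half_pos one_pos (by positivity)
    (by positivity) using 3 with N n
  · rw [momentGap, mul_sub, mul_momentIntegral_zero (by positivity) hx,
      mul_momentIntegral_zero (by positivity) hx]
  · have := Gamma_pos_of_pos (by positivity : 0 < x + 1)
    have := Gamma_pos_of_pos (by positivity : 0 < x + 1 / 2)
    rw [Gamma_one, Gamma_one_half_eq, log_one, log_div (by positivity) (by positivity),
      log_mul (by positivity) (by positivity)]
    ring

end MomentGap

noncomputable def gammaRatioSeries (k : ℕ) (x : ℝ) : ℝ :=
  log 2 / x ^ (k + 1) + ∑' n, momentGap k n x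

section GammaRatioSeries

variable {x : ℝ}

lemma gammaRatioSeries_nonneg (k : ℕ) (hx : 0 < x) : 0 ≤ gammaRatioSeries k x :=
  add_nonneg (div_nonneg (log_nonneg one_le_two) (by positivity))
    (tsum_nonneg fun n => momentGap_nonneg k n hx.le)

lemma hasDerivAt_gammaRatioSeries (k : ℕ) (hx : 0 < x) :
    HasDerivAt (gammaRatioSeries k) (-((k + 1) * gammaRatioSeries (k + 1) x)) x := by
  have hpow : HasDerivAt (fun y => log 2 / y ^ (k + 1)) (-((k + 1) * (log 2 / x ^ (k + 2)))) x :=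
    ((hasDerivAt_const x (log 2)).div (hasDerivAt_pow (k + 1) x)
      (pow_ne_zero _ hx.ne')).congr_deriv
        (by simp only [Nat.add_sub_cancel]; push_cast; field_simp; ring)
  have htsum : HasDerivAt (fun y => ∑' n, momentGap k n y)
      (∑' n, -((k + 1) * momentGap (k + 1) n x)) x := by
    refine hasDerivAt_tsum_of_isPreconnected
      (u := fun n : ℕ =>
        (k + 1) * ((((k + 1 : ℕ) : ℝ) + 1) / 2 * (1 / ((n : ℝ) + 1 / 2) ^ (k + 1 + 2))))
      (((summable_one_div_nat_add_pow one_half_pos (by omega)).mul_left _).mul_left _)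
      isOpen_Ioi isPreconnected_Ioi (fun n y hy => hasDerivAt_momentGap k n hy)
      (fun n y (hy : 0 < y) => ?_) hx (summable_momentGap k hx.le) hx
    rw [norm_neg, Real.norm_of_nonneg (mul_nonneg (by positivity) (momentGap_nonneg _ _ hy.le))]
    exact mul_le_mul_of_nonneg_left (momentGap_le (k + 1) n hy.le) (by positivity)
  rw [tsum_neg, tsum_mul_left] at htsum
  exact (hpow.add htsum).congr_deriv (by rw [gammaRatioSeries]; ring)

lemma log_rpow_eq_gammaRatioSeries_zero (hx : 0 < x) :
    log ((2 * √π * Gamma (x + 1) / Gamma (x + 1 / 2)) ^ (1 / x)) = gammaRatioSeries 0 x := by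
  have := Gamma_pos_of_pos (by positivity : 0 < x + 1)
  have := Gamma_pos_of_pos (by positivity : 0 < x + 1 / 2)
  rw [gammaRatioSeries, (hasSum_momentGap_zero hx).tsum_eq, log_rpow (by positivity),
    mul_assoc, mul_div_assoc, log_mul two_ne_zero (by positivity), zero_add, pow_one]
  ring

end GammaRatioSeries

theorem stmt_2 :
    ∀ k : ℕ, 1 ≤ k → ∀ x : ℝ, 0 < x →
      0 ≤ (-1 : ℝ) ^ k *
        iteratedDeriv k
          (fun y : ℝ =>
            Real.log ((2 * Real.sqrt π * Real.Gamma (y + 1) / Real.Gamma (y + 1 / 2)) ^ (1 / y))) x := by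
  intro k _ x hx
  have hderiv := iteratedDeriv_eqOn_of_hasDerivAt
    (F := fun k y => (-1 : ℝ) ^ k * k.factorial * gammaRatioSeries k y) isOpen_Ioi
    (fun y hy => (log_rpow_eq_gammaRatioSeries_zero hy).trans (by simp))
    (fun k y hy => ((hasDerivAt_gammaRatioSeries k hy).const_mul _).congr_deriv
      (by push_cast [Nat.factorial_succ]; ring)) k hx
  rw [hderiv, ← mul_assoc, ← mul_assoc, ← pow_add, Even.neg_one_pow ⟨k, rfl⟩, one_mul]
  exact mul_nonneg (by positivity) (gammaRatioSeries_nonneg k hx)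
end

section
/- Let a, b, c > 0 and, for an integer k ≥ 1, define H_{a,b;c;k}(x) = ln c + ln Γ(x+a) − ln Γ(x+b) + Σ_{i=1}^{k} ((−1)^i x^i / i!)·[ψ^{(i−1)}(x+a) − ψ^{(i−1)}(x+b)] for x > 0. Then for every integer k ≥ 1 and every x > 0, the k-th derivative of ln h_{a,b;c}, where h_{a,b;c}(x) = (c·Γ(x+a)/Γ(x+b))^{1/x}, satisfies (d^k/dx^k)[ln h_{a,b;c}(x)] = ((−1)^k k! / x^{k+1}) · H_{a,b;c;k}(x). -/
open Real Finset

/-- The polygamma function `ψ^{(i)}`, the `i`-th derivative of the digamma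
function `ψ = (log Γ)'`; in particular `polygamma 0 = ψ`. -/
noncomputable def polygamma (i : ℕ) (x : ℝ) : ℝ :=
  iteratedDeriv (i + 1) (fun y : ℝ => Real.log (Real.Gamma y)) x

/-- The auxiliary function `H_{a,b;c;k}`. -/
noncomputable def H (a b c : ℝ) (k : ℕ) (x : ℝ) : ℝ :=
  Real.log c + Real.log (Real.Gamma (x + a)) - Real.log (Real.Gamma (x + b)) +
    ∑ i ∈ Finset.Icc 1 k,
      ((-1 : ℝ) ^ i * x ^ i / (Nat.factorial i : ℝ)) *
        (polygamma (i - 1) (x + a) - polygamma (i - 1) (x + b))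

/-!
Write `F y = log c + log Γ(y + a) - log Γ(y + b)`, so that `log h = F · y⁻¹`. The Leibniz rule
together with `(y⁻¹)⁽ᵐ⁾ = (-1)ᵐ m! / yᵐ⁺¹` gives, for any `F` smooth near `x ≠ 0`,
`(F / y)⁽ᵏ⁾(x) = (-1)ᵏ k! / xᵏ⁺¹ · ∑_{i ≤ k} (-1)ⁱ xⁱ / i! · F⁽ⁱ⁾(x)`, and for `i ≥ 1` the
derivative `F⁽ⁱ⁾(x)` is `ψ⁽ⁱ⁻¹⁾(x + a) - ψ⁽ⁱ⁻¹⁾(x + b)`. Smoothness of `log Γ` away from the poles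
comes from `Γ = (1 / Γ)⁻¹` with `1 / Γ` entire.
-/

open scoped Nat

namespace Complex

theorem analyticAt_Gamma {s : ℂ} (hs : ∀ m : ℕ, s ≠ -m) : AnalyticAt ℂ Gamma s := by
  simpa [Pi.inv_def] using
    (differentiable_one_div_Gamma.analyticAt s).inv (inv_ne_zero (Gamma_ne_zero hs))

end Complex

namespace Real

theorem contDiffAt_Gamma {n : WithTop ℕ∞} {s : ℝ} (hs : ∀ m : ℕ, s ≠ -m) :
    ContDiffAt ℝ n Gamma s :=
  (Complex.analyticAt_Gamma (s := s) (by exact_mod_cast hs)).contDiffAt.real_of_complex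

theorem contDiffAt_log_Gamma {n : WithTop ℕ∞} {s : ℝ} (hs : ∀ m : ℕ, s ≠ -m) :
    ContDiffAt ℝ n (fun y => log (Gamma y)) s :=
  (contDiffAt_log.2 (Gamma_ne_zero hs)).comp s (contDiffAt_Gamma hs)

theorem contDiffAt_log_Gamma_comp_add {n : WithTop ℕ∞} {s x : ℝ} (hs : ∀ m : ℕ, x + s ≠ -m) :
    ContDiffAt ℝ n (fun y => log (Gamma (y + s))) x :=
  (contDiffAt_log_Gamma hs).comp x (contDiffAt_id.add contDiffAt_const)

theorem iteratedDeriv_succ_log_Gamma_ratio (c : ℝ) {a b x : ℝ}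
    (ha : ∀ m : ℕ, x + a ≠ -m) (hb : ∀ m : ℕ, x + b ≠ -m) (i : ℕ) :
    iteratedDeriv (i + 1)
        (fun y => log c + log (Gamma (y + a)) - log (Gamma (y + b))) x
      = polygamma i (x + a) - polygamma i (x + b) := by
  rw [iteratedDeriv_fun_sub (n := i + 1) (contDiffAt_const.add (contDiffAt_log_Gamma_comp_add ha))
      (contDiffAt_log_Gamma_comp_add hb), iteratedDeriv_const_add (n := i + 1) i.succ_pos,
    iteratedDeriv_comp_add_const (f := fun y => log (Gamma y)),
    iteratedDeriv_comp_add_const (f := fun y => log (Gamma y))]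
  rfl

end Real

theorem iteratedDeriv_div_id {𝕜 : Type*} [NontriviallyNormedField 𝕜] [CharZero 𝕜]
    {f : 𝕜 → 𝕜} {n : ℕ} {x : 𝕜} (hf : ContDiffAt 𝕜 n f x) (hx : x ≠ 0) :
    iteratedDeriv n (fun y => f y / y) x = (-1) ^ n * n ! / x ^ (n + 1) *
      ∑ i ∈ range (n + 1), (-1) ^ i * x ^ i / i ! * iteratedDeriv i f x := by
  simp_rw [div_eq_mul_inv (f _)]
  rw [iteratedDeriv_fun_mul hf (contDiffAt_inv 𝕜 hx), mul_sum]
  refine sum_congr rfl fun i hi => ?_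
  obtain ⟨j, rfl⟩ := Nat.exists_eq_add_of_le (mem_range_succ_iff.1 hi)
  have hchoose : ((i + j).choose i : 𝕜) * i ! * j ! = (i + j) ! := by
    rw [Nat.choose_symm_add]; exact_mod_cast Nat.add_choose_mul_factorial_mul_factorial i j
  rw [Nat.add_sub_cancel_left, iteratedDeriv_eq_iterate (f := Inv.inv), iter_deriv_inv,
    show (-1 - j : ℤ) = -((j + 1 : ℕ) : ℤ) by push_cast; ring, zpow_neg, zpow_natCast, ← hchoose]
  have hfact : (i ! : 𝕜) ≠ 0 := Nat.cast_ne_zero.2 i.factorial_ne_zero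
  have hsign : (-1 : 𝕜) ^ (i + j) * (-1) ^ i = (-1) ^ j := by
    rw [pow_add, mul_right_comm, ← mul_pow]; simp
  field_simp
  linear_combination -(((i + j).choose i : 𝕜) * iteratedDeriv i f x * j ! * x ^ (i + j + 1)) * hsign

theorem stmt_3_general (a b c : ℝ) (ha : 0 < a) (hb : 0 < b)
    (k : ℕ) (x : ℝ) (hx : 0 < x) :
    iteratedDeriv k
        (fun y : ℝ =>
          (Real.log c + Real.log (Real.Gamma (y + a)) - Real.log (Real.Gamma (y + b))) / y) x
      = ((-1 : ℝ) ^ k * (Nat.factorial k : ℝ) / x ^ (k + 1)) * H a b c k x := by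
  have not_pole {s : ℝ} (hs : 0 < s) (m : ℕ) : s ≠ -m :=
    (hs.trans_le' (neg_nonpos.2 m.cast_nonneg)).ne'
  have hxa := not_pole (add_pos hx ha)
  have hxb := not_pole (add_pos hx hb)
  have hF : ContDiffAt ℝ k (fun y => log c + log (Gamma (y + a)) - log (Gamma (y + b))) x :=
    (contDiffAt_const.add (contDiffAt_log_Gamma_comp_add hxa)).sub
      (contDiffAt_log_Gamma_comp_add hxb)
  rw [iteratedDeriv_div_id hF hx.ne', range_eq_Ico, sum_eq_sum_Ico_succ_bot k.succ_pos,
    zero_add, Nat.succ_eq_add_one, Ico_add_one_right_eq_Icc, H]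
  congr 2
  · simp
  · refine sum_congr rfl fun i hi => ?_
    obtain ⟨j, rfl⟩ := Nat.exists_eq_add_of_le' (mem_Icc.1 hi).1
    rw [Real.iteratedDeriv_succ_log_Gamma_ratio c hxa hxb, Nat.add_sub_cancel]

theorem stmt_3 (a b c : ℝ) (ha : 0 < a) (hb : 0 < b) (hc : 0 < c)
    (k : ℕ) (hk : 1 ≤ k) (x : ℝ) (hx : 0 < x) :
    iteratedDeriv k
        (fun y : ℝ =>
          (Real.log c + Real.log (Real.Gamma (y + a)) - Real.log (Real.Gamma (y + b))) / y) x
      = ((-1 : ℝ) ^ k * (Nat.factorial k : ℝ) / x ^ (k + 1)) * H a b c k x :=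
  stmt_3_general a b c ha hb k x hx
end

section
/- Let a, b, c > 0 with a > b and, for an integer k ≥ 1, define H_{a,b;c;k}(x) = ln c + ln Γ(x+a) − ln Γ(x+b) + Σ_{i=1}^{k} ((−1)^i x^i / i!)·[ψ^{(i−1)}(x+a) − ψ^{(i−1)}(x+b)] for x ≥ 0. Then H_{a,b;c;k} is (strictly) increasing on (0,∞). -/
/-!
By the product rule the derivative of the sum telescopes, leaving
`H'(x) = (-1)^k x^k / k! · (ψ^{(k)}(x + a) - ψ^{(k)}(x + b))`.
Differentiating the Weierstrass series `log Γ(x) = -γx - log x + ∑ₙ (x/(n+1) - log(1 + x/(n+1)))`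
termwise gives `ψ^{(m+1)}(x) = (-1)^m (m+1)! ∑ₙ (x+n)^{-(m+2)}`, so `(-1)^k ψ^{(k)}` has a positive
derivative and is strictly increasing on `(0, ∞)`; as `a > b`, `H' > 0` there.
-/

open Real Finset

open Filter Topology
open scoped Nat

section IteratedDeriv

variable {𝕜 F : Type*} [NontriviallyNormedField 𝕜] [NormedAddCommGroup F] [NormedSpace 𝕜 F]
  {g : 𝕜 → F} {f : ℕ → 𝕜 → F} {U : Set 𝕜}

theorem iteratedDeriv_eqOn_of_hasDerivAt_s5 (hU : IsOpen U) (h0 : Set.EqOn g (f 0) U)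
    (hf : ∀ n, ∀ x ∈ U, HasDerivAt (f n) (f (n + 1) x) x) (n : ℕ) :
    Set.EqOn (iteratedDeriv n g) (f n) U := by
  induction n with
  | zero => simpa using h0
  | succ n ih =>
    intro x hx
    rw [iteratedDeriv_succ]
    exact ((hf n x hx).congr_of_eventuallyEq (ih.eventuallyEq_of_mem (hU.mem_nhds hx))).deriv

theorem hasDerivAt_iteratedDeriv_of_hasDerivAt (hU : IsOpen U) (h0 : Set.EqOn g (f 0) U)
    (hf : ∀ n, ∀ x ∈ U, HasDerivAt (f n) (f (n + 1) x) x) (n : ℕ) {x : 𝕜} (hx : x ∈ U) :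
    HasDerivAt (iteratedDeriv n g) (iteratedDeriv (n + 1) g x) x := by
  have hEq := iteratedDeriv_eqOn_of_hasDerivAt_s5 hU h0 hf
  rw [hEq (n + 1) hx]
  exact (hf n x hx).congr_of_eventuallyEq ((hEq n).eventuallyEq_of_mem (hU.mem_nhds hx))

end IteratedDeriv

theorem hasDerivAt_sum_neg_one_pow_mul_pow_div_factorial {𝕜 : Type*} [NontriviallyNormedField 𝕜]
    [CharZero 𝕜] {F : ℕ → 𝕜 → 𝕜} {x : 𝕜} (hF : ∀ i, HasDerivAt (F i) (F (i + 1) x) x) (k : ℕ) :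
    HasDerivAt (fun y => ∑ i ∈ range (k + 1), (-1) ^ i * y ^ i / i ! * F i y)
      ((-1) ^ k * x ^ k / k ! * F (k + 1) x) x := by
  induction k with
  | zero => simpa using hF 0
  | succ k ih =>
    simp_rw [sum_range_succ _ (k + 1)]
    have hpow := ((hasDerivAt_pow (k + 1) x).const_mul ((-1 : 𝕜) ^ (k + 1))).div_const
      ((k + 1)! : 𝕜)
    refine (ih.add (hpow.mul (hF (k + 1)))).congr_deriv ?_
    push_cast [Nat.factorial_succ]
    field_simp
    ring

theorem summable_inv_add_nat_pow (x : ℝ) {m : ℕ} (hm : 2 ≤ m) :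
    Summable fun n : ℕ => ((x + n) ^ m)⁻¹ := by
  refine Summable.of_norm ?_
  refine ((Real.summable_one_div_nat_add_rpow x m).2 (by exact_mod_cast hm)).congr fun n => ?_
  simp [Real.rpow_natCast, add_comm]

theorem summable_inv_nat_add_one_sq : Summable fun n : ℕ => (((n : ℝ) + 1) ^ 2)⁻¹ :=
  (summable_inv_add_nat_pow 1 le_rfl).congr fun n => by rw [add_comm (1 : ℝ)]

noncomputable def logGammaTerm (n : ℕ) (y : ℝ) : ℝ :=
  y * ((n : ℝ) + 1)⁻¹ - (log (y + (n + 1)) - log (n + 1))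

noncomputable def digammaTerm (n : ℕ) (y : ℝ) : ℝ := ((n : ℝ) + 1)⁻¹ - (y + (n + 1))⁻¹

theorem digammaTerm_eq (n : ℕ) {y : ℝ} (hy : 0 < y + (n + 1)) :
    digammaTerm n y = y / ((n + 1) * (y + (n + 1))) := by
  rw [digammaTerm]
  field_simp
  ring

theorem digammaTerm_nonneg (n : ℕ) {y : ℝ} (hy : 0 ≤ y) : 0 ≤ digammaTerm n y := by
  rw [digammaTerm_eq n (by positivity)]
  positivity

theorem digammaTerm_mono (n : ℕ) {y z : ℝ} (hy : 0 < y + (n + 1)) (hyz : y ≤ z) :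
    digammaTerm n y ≤ digammaTerm n z :=
  sub_le_sub_left (inv_anti₀ hy (by linarith)) _

theorem digammaTerm_le (n : ℕ) {y : ℝ} (hy : 0 ≤ y) :
    digammaTerm n y ≤ y * (((n : ℝ) + 1) ^ 2)⁻¹ := by
  rw [digammaTerm_eq n (by positivity), ← div_eq_mul_inv, sq]
  exact div_le_div_of_nonneg_left hy (by positivity)
    (mul_le_mul_of_nonneg_left (by linarith) (by positivity))

theorem summable_digammaTerm {y : ℝ} (hy : 0 ≤ y) : Summable fun n => digammaTerm n y :=
  (summable_inv_nat_add_one_sq.mul_left y).of_nonneg_of_le (fun n => digammaTerm_nonneg n hy)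
    fun n => digammaTerm_le n hy

theorem logGammaTerm_mem_Icc (n : ℕ) {y : ℝ} (hy : 0 ≤ y) :
    logGammaTerm n y ∈ Set.Icc 0 (y * digammaTerm n y) := by
  have hn : (0 : ℝ) < n + 1 := by positivity
  have hyn : 0 < y + (n + 1) := by positivity
  have hlog : log (y + (n + 1)) - log (n + 1) = log ((y + (n + 1)) / (n + 1)) :=
    (log_div hyn.ne' hn.ne').symm
  have hupper := log_le_sub_one_of_pos (x := (y + (n + 1)) / (n + 1)) (by positivity)
  have hlower := one_sub_inv_le_log_of_pos (x := (y + (n + 1)) / (n + 1)) (by positivity)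
  rw [inv_div] at hlower
  have hupper' : (y + (n + 1)) / (n + 1) - 1 = y * ((n : ℝ) + 1)⁻¹ := by field_simp; ring
  have hlower' : 1 - (n + 1) / (y + (n + 1)) =
      y * ((n : ℝ) + 1)⁻¹ - y * (((n : ℝ) + 1)⁻¹ - (y + (n + 1))⁻¹) := by field_simp; ring
  rw [logGammaTerm, digammaTerm, hlog]
  constructor <;> linarith

theorem summable_logGammaTerm {y : ℝ} (hy : 0 ≤ y) : Summable fun n => logGammaTerm n y :=
  ((summable_digammaTerm hy).mul_left y).of_nonneg_of_le (fun n => (logGammaTerm_mem_Icc n hy).1)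
    fun n => (logGammaTerm_mem_Icc n hy).2

theorem hasDerivAt_logGammaTerm (n : ℕ) {y : ℝ} (hy : 0 < y + (n + 1)) :
    HasDerivAt (logGammaTerm n) (digammaTerm n y) y := by
  have hlog := ((hasDerivAt_id' y).add_const ((n : ℝ) + 1)).log hy.ne'
  refine (((hasDerivAt_mul_const ((n : ℝ) + 1)⁻¹).sub (hlog.sub_const _))).congr_deriv ?_
  rw [digammaTerm]
  field_simp

theorem hasDerivAt_digammaTerm (n : ℕ) {y : ℝ} (hy : y + (n + 1) ≠ 0) :
    HasDerivAt (digammaTerm n) (((y + (n + 1)) ^ 2)⁻¹) y := by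
  refine ((((hasDerivAt_id' y).add_const ((n : ℝ) + 1)).fun_inv hy).const_sub
    ((n : ℝ) + 1)⁻¹).congr_deriv ?_
  field_simp

theorem logGammaSeq_eq (x : ℝ) (N : ℕ) :
    BohrMollerup.logGammaSeq x N =
      -log x + ∑ n ∈ range N, logGammaTerm n x - x * (harmonic N - log N) := by
  induction N with
  | zero => simp [BohrMollerup.logGammaSeq]
  | succ N ih =>
    have hstep : BohrMollerup.logGammaSeq x (N + 1) = BohrMollerup.logGammaSeq x N +
        x * (log (N + 1) - log N) + log (N + 1) - log (x + (N + 1)) := by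
      simp only [BohrMollerup.logGammaSeq, sum_range_succ _ (N + 1), Nat.factorial_succ]
      push_cast
      rw [log_mul (by positivity) (by positivity)]
      ring
    rw [hstep, ih, sum_range_succ, harmonic_succ, logGammaTerm]
    push_cast
    ring

noncomputable def logGamma (y : ℝ) : ℝ := log (Gamma y)

theorem logGamma_eq_tsum {x : ℝ} (hx : 0 < x) :
    logGamma x = -eulerMascheroniConstant * x - log x + ∑' n, logGammaTerm n x := by
  have hseries : Tendsto (BohrMollerup.logGammaSeq x) atTop
      (𝓝 (-log x + ∑' n, logGammaTerm n x - x * eulerMascheroniConstant)) := by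
    simp_rw [funext (logGammaSeq_eq x)]
    exact (((summable_logGammaTerm hx.le).hasSum.tendsto_sum_nat).const_add _).sub
      (tendsto_harmonic_sub_log.const_mul x)
  rw [logGamma, tendsto_nhds_unique (BohrMollerup.tendsto_log_gamma hx) hseries]
  ring

theorem hasDerivAt_tsum_logGammaTerm {x : ℝ} (hx : 0 < x) :
    HasDerivAt (fun y => ∑' n, logGammaTerm n y) (∑' n, digammaTerm n x) x :=
  hasDerivAt_tsum_of_isPreconnected (t := Set.Ioo 0 (x + 1)) (u := fun n => digammaTerm n (x + 1))
    (summable_digammaTerm (by linarith)) isOpen_Ioo (convex_Ioo _ _).isPreconnected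
    (fun n _ hy => hasDerivAt_logGammaTerm n (by linarith [hy.1]))
    (fun n _ hy => by
      rw [norm_of_nonneg (digammaTerm_nonneg n hy.1.le)]
      exact digammaTerm_mono n (by linarith [hy.1]) hy.2.le)
    ⟨hx, lt_add_one x⟩ (summable_logGammaTerm hx.le) ⟨hx, lt_add_one x⟩

theorem hasDerivAt_tsum_digammaTerm {x : ℝ} (hx : 0 < x) :
    HasDerivAt (fun y => ∑' n, digammaTerm n y) (∑' n : ℕ, ((x + (n + 1)) ^ 2)⁻¹) x :=
  hasDerivAt_tsum_of_isPreconnected (t := Set.Ioi 0) summable_inv_nat_add_one_sq isOpen_Ioi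
    (convex_Ioi _).isPreconnected
    (fun n _ (hy : 0 < _) => hasDerivAt_digammaTerm n (by positivity))
    (fun n _ (hy : 0 < _) => by
      rw [norm_of_nonneg (by positivity)]
      exact inv_anti₀ (by positivity) (pow_le_pow_left₀ (by positivity) (by linarith) 2))
    hx (summable_digammaTerm hx.le) hx

theorem hasDerivAt_inv_add_pow (c : ℝ) (m : ℕ) {y : ℝ} (hy : y + c ≠ 0) :
    HasDerivAt (fun z => ((z + c) ^ m)⁻¹) (-m * ((y + c) ^ (m + 1))⁻¹) y := by
  refine ((((hasDerivAt_id' y).add_const c).fun_pow m).fun_inv (pow_ne_zero _ hy)).congr_deriv ?_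
  rcases m with _ | m
  · simp
  · rw [Nat.add_sub_cancel]
    field_simp
    ring

/-- The Hurwitz zeta function `ζ(m, y)` at an integer `m`. -/
noncomputable def invPowSum (m : ℕ) (y : ℝ) : ℝ := ∑' n : ℕ, ((y + n) ^ m)⁻¹

theorem invPowSum_pos {m : ℕ} (hm : 2 ≤ m) {x : ℝ} (hx : 0 < x) : 0 < invPowSum m x :=
  (summable_inv_add_nat_pow x hm).tsum_pos (fun n => by positivity) 0 (by simpa using pow_pos hx m)

theorem invPowSum_two (x : ℝ) :
    invPowSum 2 x = (x ^ 2)⁻¹ + ∑' n : ℕ, ((x + (n + 1)) ^ 2)⁻¹ := by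
  rw [invPowSum, (summable_inv_add_nat_pow x le_rfl).tsum_eq_zero_add]
  push_cast
  simp

theorem hasDerivAt_invPowSum {m : ℕ} (hm : 2 ≤ m) {x : ℝ} (hx : 0 < x) :
    HasDerivAt (invPowSum m) (-m * invPowSum (m + 1) x) x := by
  have hsum := hasDerivAt_tsum_of_isPreconnected (t := Set.Ioi (x / 2))
    (u := fun n : ℕ => m * ((x / 2 + n) ^ (m + 1))⁻¹)
    (g := fun (n : ℕ) (y : ℝ) => ((y + n) ^ m)⁻¹)
    (g' := fun (n : ℕ) (y : ℝ) => -m * ((y + n) ^ (m + 1))⁻¹)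
    ((summable_inv_add_nat_pow (x / 2) (by omega)).mul_left (m : ℝ)) isOpen_Ioi
    (convex_Ioi _).isPreconnected
    (fun n y (hy : x / 2 < y) => hasDerivAt_inv_add_pow _ m (by
      have : 0 < y := by linarith
      positivity))
    (fun n y (hy : x / 2 < y) => by
      have : 0 < y := by linarith
      rw [norm_mul, norm_neg, Real.norm_natCast, norm_of_nonneg (by positivity)]
      gcongr)
    (half_lt_self hx) (summable_inv_add_nat_pow x hm) (half_lt_self hx)
  rwa [invPowSum, ← tsum_mul_left]

/-- The Weierstrass series of `log Γ` and its termwise derivatives. -/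
noncomputable def logGammaDerivSeries : ℕ → ℝ → ℝ
  | 0, y => -eulerMascheroniConstant * y - log y + ∑' n, logGammaTerm n y
  | 1, y => -eulerMascheroniConstant - y⁻¹ + ∑' n, digammaTerm n y
  | m + 2, y => (-1) ^ m * (m + 1)! * invPowSum (m + 2) y

theorem hasDerivAt_logGammaDerivSeries (m : ℕ) {x : ℝ} (hx : 0 < x) :
    HasDerivAt (logGammaDerivSeries m) (logGammaDerivSeries (m + 1) x) x := by
  match m with
  | 0 =>
    exact ((((hasDerivAt_id' x).const_mul _).sub (hasDerivAt_log hx.ne')).add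
      (hasDerivAt_tsum_logGammaTerm hx)).congr_deriv (by simp [logGammaDerivSeries])
  | 1 =>
    refine (((hasDerivAt_inv hx.ne').const_sub _).add
      (hasDerivAt_tsum_digammaTerm hx)).congr_deriv ?_
    simp [logGammaDerivSeries, invPowSum_two]
  | m + 2 =>
    refine ((hasDerivAt_invPowSum (by omega) hx).const_mul _).congr_deriv ?_
    simp only [logGammaDerivSeries, Nat.factorial_succ (m + 1)]
    push_cast
    ring

theorem iteratedDeriv_logGamma_eqOn (m : ℕ) :
    Set.EqOn (iteratedDeriv m logGamma) (logGammaDerivSeries m) (Set.Ioi 0) :=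
  iteratedDeriv_eqOn_of_hasDerivAt_s5 isOpen_Ioi (fun _ hx => logGamma_eq_tsum hx)
    (fun n _ hx => hasDerivAt_logGammaDerivSeries n hx) m

theorem hasDerivAt_iteratedDeriv_logGamma (m : ℕ) {x : ℝ} (hx : 0 < x) :
    HasDerivAt (iteratedDeriv m logGamma) (iteratedDeriv (m + 1) logGamma x) x :=
  hasDerivAt_iteratedDeriv_of_hasDerivAt isOpen_Ioi (fun _ hx => logGamma_eq_tsum hx)
    (fun n _ hx => hasDerivAt_logGammaDerivSeries n hx) m hx

theorem polygamma_eq_iteratedDeriv (i : ℕ) : polygamma i = iteratedDeriv (i + 1) logGamma := rfl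

theorem neg_one_pow_mul_polygamma_succ_pos (k : ℕ) {x : ℝ} (hx : 0 < x) :
    0 < (-1) ^ k * polygamma (k + 1) x := by
  rw [polygamma_eq_iteratedDeriv, iteratedDeriv_logGamma_eqOn (k + 2) hx, logGammaDerivSeries,
    ← mul_assoc, ← mul_assoc, ← pow_add, Even.neg_one_pow ⟨k, rfl⟩, one_mul]
  exact mul_pos (by positivity) (invPowSum_pos (by omega) hx)

theorem strictMonoOn_neg_one_pow_mul_polygamma (k : ℕ) :
    StrictMonoOn (fun y => (-1) ^ k * polygamma k y) (Set.Ioi 0) := by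
  have hderiv (x : ℝ) (hx : 0 < x) :
      HasDerivAt (fun y => (-1) ^ k * polygamma k y) ((-1) ^ k * polygamma (k + 1) x) x := by
    rw [polygamma_eq_iteratedDeriv, polygamma_eq_iteratedDeriv]
    exact (hasDerivAt_iteratedDeriv_logGamma (k + 1) hx).const_mul _
  refine strictMonoOn_of_hasDerivWithinAt_pos (convex_Ioi 0)
    (fun x hx => (hderiv x hx).continuousAt.continuousWithinAt)
    (fun x hx => (hderiv x (interior_subset hx)).hasDerivWithinAt) fun x hx => ?_
  exact neg_one_pow_mul_polygamma_succ_pos k (interior_subset hx)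

theorem H_eq_sum_range (a b c : ℝ) (k : ℕ) :
    H a b c k = fun y => log c + ∑ i ∈ range (k + 1), (-1) ^ i * y ^ i / i ! *
      (iteratedDeriv i logGamma (y + a) - iteratedDeriv i logGamma (y + b)) := by
  funext y
  rw [H, sum_range_succ', ← Finset.Ico_add_one_right_eq_Icc, sum_Ico_eq_sum_range]
  simp only [polygamma_eq_iteratedDeriv, add_tsub_cancel_right, add_comm 1]
  simp only [pow_zero, mul_one, Nat.factorial_zero, Nat.cast_one, div_one, one_mul,
    iteratedDeriv_zero, logGamma]
  ring

theorem hasDerivAt_H (a b c : ℝ) (k : ℕ) {x : ℝ} (hxa : 0 < x + a) (hxb : 0 < x + b) :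
    HasDerivAt (H a b c k)
      ((-1) ^ k * x ^ k / k ! * (polygamma k (x + a) - polygamma k (x + b))) x := by
  rw [H_eq_sum_range]
  refine (hasDerivAt_sum_neg_one_pow_mul_pow_div_factorial (fun i => ?_) k).const_add _
  exact ((hasDerivAt_iteratedDeriv_logGamma i hxa).comp_add_const x a).sub
    ((hasDerivAt_iteratedDeriv_logGamma i hxb).comp_add_const x b)

theorem stmt_5_general (a b c : ℝ) (hb : 0 < b) (hab : b < a) (k : ℕ) :
    StrictMonoOn (H a b c k) (Set.Ioi (0 : ℝ)) := by
  have hderiv (x : ℝ) (hx : 0 < x) := hasDerivAt_H a b c k (x := x) (by linarith) (by linarith)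
  refine strictMonoOn_of_hasDerivWithinAt_pos (convex_Ioi 0)
    (fun x hx => (hderiv x hx).continuousAt.continuousWithinAt)
    (fun x hx => (hderiv x (interior_subset hx)).hasDerivWithinAt) fun x hx => ?_
  have hx : 0 < x := interior_subset hx
  have hψ := strictMonoOn_neg_one_pow_mul_polygamma k (show 0 < x + b by linarith)
    (show 0 < x + a by linarith) (by linarith)
  calc (0 : ℝ)
      < x ^ k / k ! * ((-1) ^ k * polygamma k (x + a) - (-1) ^ k * polygamma k (x + b)) :=
        mul_pos (by positivity) (sub_pos.2 hψ)
    _ = _ := by ring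

theorem stmt_5 (a b c : ℝ) (ha : 0 < a) (hb : 0 < b) (hc : 0 < c)
    (hab : b < a) (k : ℕ) (hk : 1 ≤ k) :
    StrictMonoOn (H a b c k) (Set.Ioi (0 : ℝ)) :=
  stmt_5_general a b c hb hab k
end

section
/- Let a, b, c > 0 with a > b and c ≥ Γ(b)/Γ(a), and for an integer k ≥ 1 define H_{a,b;c;k}(x) = ln c + ln Γ(x+a) − ln Γ(x+b) + Σ_{i=1}^{k} ((−1)^i x^i / i!)·[ψ^{(i−1)}(x+a) − ψ^{(i−1)}(x+b)] for x ≥ 0. Then H_{a,b;c;k}(x) > 0 for every x > 0. -/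
open Real Finset

/-!
Put `D(y) = log Γ(y + a) - log Γ(y + b)`. Since `ψ⁽ⁱ⁻¹⁾(x + a) - ψ⁽ⁱ⁻¹⁾(x + b) = D⁽ⁱ⁾(x)`, the sum
in `H(x)` is the Taylor polynomial of `D` at `x` evaluated at `0`, so Taylor's theorem gives
`H(x) = log c + D(0) - D⁽ᵏ⁺¹⁾(ξ) (-x)ᵏ⁺¹ / (k+1)!` for some `ξ ∈ (0, x)`. The choice of `c` makes
`log c + D(0) ≥ 0`, and the remainder term is negative because `D'` is completely monotone:
differentiating Euler's limit formula for `log Γ` termwise gives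
`(-1)ʲ D⁽ʲ⁺¹⁾(y) = j! ∑ₘ ((y + b + m)⁻ʲ⁻¹ - (y + a + m)⁻ʲ⁻¹) > 0`.
-/

open Filter Topology

lemma hasDerivAt_inv_pow {x : ℝ} (hx : x ≠ 0) (j : ℕ) :
    HasDerivAt (fun t : ℝ => (t ^ j)⁻¹) (-j * (x ^ (j + 1))⁻¹) x := by
  have h := hasDerivAt_zpow (-(j : ℤ)) x (.inl hx)
  simp only [zpow_neg, zpow_natCast] at h
  refine h.congr_deriv ?_
  rw [show -(j : ℤ) - 1 = -((j + 1 : ℕ) : ℤ) by push_cast; ring, zpow_neg, zpow_natCast]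
  push_cast
  ring

lemma inv_pow_sub_inv_pow_le {u v : ℝ} (hu : 0 < u) (huv : u ≤ v) (j : ℕ) :
    (u ^ j)⁻¹ - (v ^ j)⁻¹ ≤ j * (v - u) / u ^ (j + 1) := by
  rcases huv.eq_or_lt with rfl | huv
  · simp
  have hconv : ConvexOn ℝ (Set.Ioi 0) fun t : ℝ => (t ^ j)⁻¹ := by
    simpa only [zpow_neg, zpow_natCast] using convexOn_zpow (𝕜 := ℝ) (-(j : ℤ))
  have h := hconv.le_slope_of_hasDerivAt hu (hu.trans huv) huv (hasDerivAt_inv_pow hu.ne' j)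
  rw [slope_def_field, le_div_iff₀ (sub_pos.2 huv)] at h
  have : j * (v - u) / u ^ (j + 1) = j * (u ^ (j + 1))⁻¹ * (v - u) := by ring
  linarith

lemma summable_inv_add_pow {ε : ℝ} (hε : 0 < ε) {j : ℕ} (hj : 2 ≤ j) :
    Summable fun m : ℕ => ((ε + m) ^ j)⁻¹ := by
  refine ((Real.summable_one_div_nat_add_rpow ε j).2 (by exact_mod_cast hj)).congr fun m => ?_
  rw [abs_of_pos (by positivity), Real.rpow_natCast, one_div, add_comm]

/-- The difference `ζ(j, y + b) - ζ(j, y + a)` of Hurwitz zeta values, which converges also for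
`j = 1`. -/
noncomputable def hurwitzDiff (a b : ℝ) (j : ℕ) (y : ℝ) : ℝ :=
  ∑' m : ℕ, (((y + b + m) ^ j)⁻¹ - ((y + a + m) ^ j)⁻¹)

section HurwitzDiff

variable {a b : ℝ}

lemma inv_pow_sub_inv_pow_nonneg (hba : b ≤ a) {y : ℝ} (hy : 0 < y + b) (j m : ℕ) :
    0 ≤ ((y + b + m) ^ j)⁻¹ - ((y + a + m) ^ j)⁻¹ :=
  sub_nonneg.2 <| inv_anti₀ (by positivity) <| pow_le_pow_left₀ (by positivity) (by linarith) j

lemma norm_inv_pow_sub_inv_pow_le (hba : b ≤ a) {ε y : ℝ} (hε : 0 < ε) (hy : ε ≤ y + b)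
    (j m : ℕ) :
    ‖((y + b + m) ^ j)⁻¹ - ((y + a + m) ^ j)⁻¹‖ ≤ j * (a - b) * ((ε + m) ^ (j + 1))⁻¹ := by
  have hab : 0 ≤ a - b := sub_nonneg.2 hba
  rw [Real.norm_of_nonneg (inv_pow_sub_inv_pow_nonneg hba (hε.trans_le hy) j m)]
  calc ((y + b + m) ^ j)⁻¹ - ((y + a + m) ^ j)⁻¹
      ≤ j * ((y + a + m) - (y + b + m)) / (y + b + m) ^ (j + 1) :=
        inv_pow_sub_inv_pow_le (by linarith) (by linarith) j
    _ = j * (a - b) / (y + b + m) ^ (j + 1) := by ring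
    _ ≤ j * (a - b) / (ε + m) ^ (j + 1) := by gcongr
    _ = j * (a - b) * ((ε + m) ^ (j + 1))⁻¹ := div_eq_mul_inv _ _

lemma summable_inv_pow_sub_inv_pow (hba : b ≤ a) {y : ℝ} (hy : 0 < y + b) {j : ℕ} (hj : 1 ≤ j) :
    Summable fun m : ℕ => ((y + b + m) ^ j)⁻¹ - ((y + a + m) ^ j)⁻¹ :=
  .of_norm_bounded ((summable_inv_add_pow hy (by omega)).mul_left _)
    (norm_inv_pow_sub_inv_pow_le hba hy le_rfl j)

lemma hurwitzDiff_pos (hba : b < a) {y : ℝ} (hy : 0 < y + b) {j : ℕ} (hj : 1 ≤ j) :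
    0 < hurwitzDiff a b j y := by
  refine (summable_inv_pow_sub_inv_pow hba.le hy hj).tsum_pos
    (inv_pow_sub_inv_pow_nonneg hba.le hy j) 0 (sub_pos.2 ?_)
  exact inv_strictAnti₀ (by positivity) (pow_lt_pow_left₀ (by linarith) (by positivity) (by omega))

lemma hasDerivAt_hurwitzDiff (hba : b ≤ a) {j : ℕ} (hj : 1 ≤ j) {y : ℝ} (hy : 0 < y + b) :
    HasDerivAt (hurwitzDiff a b j) (-j * hurwitzDiff a b (j + 1) y) y := by
  set ε := (y + b) / 2
  have hε : 0 < ε := by positivity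
  have hy' : y ∈ Set.Ioi (ε - b) := by simp only [Set.mem_Ioi, ε]; linarith
  have hmem : ∀ z ∈ Set.Ioi (ε - b), ε ≤ z + b := fun z hz => by
    have := Set.mem_Ioi.1 hz; linarith
  have hterm : ∀ (m : ℕ) z, z ∈ Set.Ioi (ε - b) → HasDerivAt
      (fun t => ((t + b + m) ^ j)⁻¹ - ((t + a + m) ^ j)⁻¹)
      (-j * (((z + b + m) ^ (j + 1))⁻¹ - ((z + a + m) ^ (j + 1))⁻¹)) z := fun m z hz => by
    have hzb : 0 < z + (b + m) := by linarith [hmem z hz, (Nat.cast_nonneg m : (0 : ℝ) ≤ m)]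
    have hb' := (hasDerivAt_inv_pow hzb.ne' j).comp_add_const z (b + m)
    have ha' := (hasDerivAt_inv_pow (by linarith : z + (a + m) ≠ 0) j).comp_add_const z (a + m)
    simp only [← add_assoc] at hb' ha'
    exact (hb'.sub ha').congr_deriv (by ring)
  have hbound := ((summable_inv_add_pow hε (by omega : 2 ≤ j + 1 + 1)).mul_left
    ((j + 1 : ℕ) * (a - b))).mul_left (j : ℝ)
  have h := hasDerivAt_tsum_of_isPreconnected hbound isOpen_Ioi isPreconnected_Ioi hterm
    (fun m z hz => ?_) hy' (summable_inv_pow_sub_inv_pow hba hy hj) hy'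
  · rwa [tsum_mul_left] at h
  · rw [norm_mul, norm_neg, Real.norm_natCast]
    gcongr
    exact norm_inv_pow_sub_inv_pow_le hba hε (hmem z hz) (j + 1) m

end HurwitzDiff

lemma hasDerivAt_logGammaSeq (n : ℕ) {x : ℝ} (hx : 0 < x) :
    HasDerivAt (fun y => BohrMollerup.logGammaSeq y n)
      (log n - ∑ m ∈ Finset.range (n + 1), (x + m)⁻¹) x := by
  have hlog : ∀ m ∈ Finset.range (n + 1), HasDerivAt (fun y : ℝ => log (y + m)) (x + m)⁻¹ x :=
    fun m _ => (hasDerivAt_log (by positivity)).comp_add_const x (m : ℝ)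
  have h := (((hasDerivAt_id x).mul_const (log n)).add_const
    (log (n.factorial : ℝ))).fun_sub (HasDerivAt.fun_sum hlog)
  simp only [id, one_mul] at h
  exact h

noncomputable def logGammaRatio (a b y : ℝ) : ℝ :=
  log (Gamma (y + a)) - log (Gamma (y + b))

section LogGammaRatio

variable {a b : ℝ}

lemma hasDerivAt_logGammaRatio (hba : b ≤ a) {y : ℝ} (hy : 0 < y + b) :
    HasDerivAt (logGammaRatio a b) (hurwitzDiff a b 1 y) y := by
  set ε := (y + b) / 2
  have hε : 0 < ε := by positivity
  have hy' : y ∈ Set.Ioi (ε - b) := by simp only [Set.mem_Ioi, ε]; linarith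
  have hmem : ∀ z ∈ Set.Ioi (ε - b), ε ≤ z + b := fun z hz => by
    have := Set.mem_Ioi.1 hz; linarith
  have hunif : TendstoUniformlyOn
      (fun n z => ∑ m ∈ Finset.range (n + 1), (((z + b + m) ^ 1)⁻¹ - ((z + a + m) ^ 1)⁻¹))
      (hurwitzDiff a b 1) atTop (Set.Ioi (ε - b)) := fun v hv =>
    (tendsto_finset_range.comp (tendsto_add_atTop_nat 1)).eventually
      (tendstoUniformlyOn_tsum ((summable_inv_add_pow hε le_rfl).mul_left _)
        (fun m z hz => norm_inv_pow_sub_inv_pow_le hba hε (hmem z hz) 1 m) v hv)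
  refine hasDerivAt_of_tendstoUniformlyOn
    (f := fun n z => BohrMollerup.logGammaSeq (z + a) n - BohrMollerup.logGammaSeq (z + b) n)
    isOpen_Ioi hunif (.of_forall fun n z hz => ?_) (fun z hz => ?_) hy'
  · have hzb : 0 < z + b := hε.trans_le (hmem z hz)
    have h := ((hasDerivAt_logGammaSeq n (by linarith : 0 < z + a)).comp_add_const z a).sub
      ((hasDerivAt_logGammaSeq n hzb).comp_add_const z b)
    refine h.congr_deriv ?_
    simp only [pow_one, Finset.sum_sub_distrib]
    ring
  · have hzb : 0 < z + b := hε.trans_le (hmem z hz)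
    exact (BohrMollerup.tendsto_log_gamma (by linarith : 0 < z + a)).sub
      (BohrMollerup.tendsto_log_gamma hzb)

lemma iteratedDeriv_succ_logGammaRatio (hba : b ≤ a) (j : ℕ) {y : ℝ} (hy : 0 < y + b) :
    iteratedDeriv (j + 1) (logGammaRatio a b) y =
      (-1) ^ j * j.factorial * hurwitzDiff a b (j + 1) y := by
  induction j generalizing y with
  | zero => simpa [iteratedDeriv_one] using (hasDerivAt_logGammaRatio hba hy).deriv
  | succ j ih =>
    have heq : iteratedDeriv (j + 1) (logGammaRatio a b) =ᶠ[𝓝 y]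
        fun z => (-1) ^ j * j.factorial * hurwitzDiff a b (j + 1) z := by
      filter_upwards [Ioi_mem_nhds (by linarith : -b < y)] with z hz
      exact ih (by linarith [Set.mem_Ioi.1 hz])
    rw [iteratedDeriv_succ, heq.deriv_eq,
      ((hasDerivAt_hurwitzDiff hba (Nat.le_add_left 1 j) hy).const_mul _).deriv,
      Nat.factorial_succ]
    push_cast
    ring

lemma neg_one_pow_mul_iteratedDeriv_succ_logGammaRatio_pos (hba : b < a) (j : ℕ) {y : ℝ}
    (hy : 0 < y + b) : 0 < (-1) ^ j * iteratedDeriv (j + 1) (logGammaRatio a b) y := by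
  rw [iteratedDeriv_succ_logGammaRatio hba.le j hy, ← mul_assoc, ← mul_assoc, ← pow_add,
    Even.neg_one_pow ⟨j, rfl⟩, one_mul]
  exact mul_pos (by positivity) (hurwitzDiff_pos hba hy (Nat.le_add_left 1 j))

lemma iteratedDeriv_succ_logGammaRatio_mul_neg_pow_neg (hba : b < a) (j : ℕ) {y x : ℝ}
    (hy : 0 < y + b) (hx : 0 < x) :
    iteratedDeriv (j + 1) (logGammaRatio a b) y * (-x) ^ (j + 1) < 0 := by
  have hpos := neg_one_pow_mul_iteratedDeriv_succ_logGammaRatio_pos hba j hy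
  have : iteratedDeriv (j + 1) (logGammaRatio a b) y * (-x) ^ (j + 1) =
      -((-1) ^ j * iteratedDeriv (j + 1) (logGammaRatio a b) y * x ^ (j + 1)) := by
    rw [neg_pow x, pow_succ]
    ring
  rw [this]
  exact neg_neg_of_pos (mul_pos hpos (pow_pos hx _))

end LogGammaRatio

lemma contDiff_inv_Gamma {n : WithTop ℕ∞} : ContDiff ℝ n fun x : ℝ => (Gamma x)⁻¹ := by
  have h : ContDiff ℝ n fun x : ℝ => ((Complex.Gamma x)⁻¹).re := Complex.reCLM.contDiff.comp
    ((Complex.differentiable_one_div_Gamma.contDiff.restrict_scalars ℝ).comp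
      Complex.ofRealCLM.contDiff)
  convert h using 2 with x
  simp [Complex.Gamma_ofReal, ← Complex.ofReal_inv]

lemma contDiffAt_log_Gamma {n : WithTop ℕ∞} {x : ℝ} (hx : 0 < x) :
    ContDiffAt ℝ n (fun y => log (Gamma y)) x := by
  have h := (contDiff_inv_Gamma (n := n)).contDiffAt.log (inv_ne_zero (Gamma_pos_of_pos hx).ne')
  simpa only [log_inv, neg_neg] using h.neg

lemma contDiffAt_log_Gamma_add_const {n : WithTop ℕ∞} {c y : ℝ} (hy : 0 < y + c) :
    ContDiffAt ℝ n (fun t => log (Gamma (t + c))) y :=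
  (contDiffAt_log_Gamma hy).comp y (contDiffAt_id.add contDiffAt_const)

lemma contDiffAt_logGammaRatio {a b : ℝ} {n : WithTop ℕ∞} {y : ℝ} (ha : 0 < y + a)
    (hb : 0 < y + b) : ContDiffAt ℝ n (logGammaRatio a b) y :=
  (contDiffAt_log_Gamma_add_const ha).sub (contDiffAt_log_Gamma_add_const hb)

lemma polygamma_sub_polygamma_eq_iteratedDeriv {a b x : ℝ} (ha : 0 < x + a) (hb : 0 < x + b)
    (i : ℕ) :
    polygamma i (x + a) - polygamma i (x + b) = iteratedDeriv (i + 1) (logGammaRatio a b) x := by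
  unfold logGammaRatio
  rw [iteratedDeriv_fun_sub (contDiffAt_log_Gamma_add_const ha) (contDiffAt_log_Gamma_add_const hb),
    iteratedDeriv_comp_add_const _ (fun y => log (Gamma y)),
    iteratedDeriv_comp_add_const _ (fun y => log (Gamma y))]
  rfl

lemma taylorWithinEval_eq_sum_iteratedDeriv {E : Type*} [NormedAddCommGroup E] [NormedSpace ℝ E]
    {f : ℝ → E} {n : ℕ} {s : Set ℝ} {x₀ : ℝ} (hs : UniqueDiffOn ℝ s) (hx₀ : x₀ ∈ s)
    (hf : ContDiffAt ℝ n f x₀) (x : ℝ) :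
    taylorWithinEval f n s x₀ x =
      ∑ i ∈ Finset.range (n + 1), ((i.factorial : ℝ)⁻¹ * (x - x₀) ^ i) • iteratedDeriv i f x₀ := by
  rw [taylor_within_apply]
  refine Finset.sum_congr rfl fun i hi => ?_
  rw [iteratedDerivWithin_eq_iteratedDeriv hs (hf.of_le ?_) hx₀]
  exact_mod_cast Nat.lt_succ_iff.1 (Finset.mem_range.1 hi)

lemma H_eq_log_add_taylorWithinEval {a b c : ℝ} (k : ℕ) {x : ℝ} (ha : 0 < x + a) (hb : 0 < x + b)
    {s : Set ℝ} (hs : UniqueDiffOn ℝ s) (hx : x ∈ s) :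
    H a b c k x = log c + taylorWithinEval (logGammaRatio a b) k s x 0 := by
  rw [taylorWithinEval_eq_sum_iteratedDeriv hs hx (contDiffAt_logGammaRatio ha hb),
    Finset.sum_range_succ', H, ← Finset.Ico_add_one_right_eq_Icc, Finset.sum_Ico_eq_sum_range,
    Nat.add_sub_cancel]
  simp only [iteratedDeriv_zero, add_comm 1, polygamma_sub_polygamma_eq_iteratedDeriv ha hb,
    Nat.add_sub_cancel, zero_sub, neg_pow x, smul_eq_mul, pow_zero, Nat.factorial_zero,
    Nat.cast_one, inv_one, logGammaRatio]
  ring_nf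

theorem stmt_6_general (a b c : ℝ) (hb : 0 < b)
    (hab : b < a) (hcge : Real.Gamma b / Real.Gamma a ≤ c)
    (k : ℕ) :
    ∀ x : ℝ, 0 < x → 0 < H a b c k x := by
  intro x hx
  have hsmooth : ContDiffOn ℝ (k + 1) (logGammaRatio a b) (Set.uIcc x 0) := fun t ht => by
    rw [Set.uIcc_of_ge hx.le] at ht
    exact (contDiffAt_logGammaRatio (by linarith [ht.1]) (by linarith [ht.1])).contDiffWithinAt
  obtain ⟨ξ, hξ, htaylor⟩ := taylor_mean_remainder_lagrange_iteratedDeriv hx.ne' hsmooth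
  rw [Set.uIoo_of_ge hx.le] at hξ
  rw [zero_sub] at htaylor
  have hremainder := div_neg_of_neg_of_pos
    (iteratedDeriv_succ_logGammaRatio_mul_neg_pow_neg hab k (by linarith [hξ.1] : 0 < ξ + b) hx)
    (by positivity : (0 : ℝ) < (k + 1).factorial)
  have hGa := Gamma_pos_of_pos (hb.trans hab)
  have hGb := Gamma_pos_of_pos hb
  have hlogc : log (Gamma b) - log (Gamma a) ≤ log c := by
    rw [← log_div hGb.ne' hGa.ne']
    exact log_le_log (div_pos hGb hGa) hcge
  rw [H_eq_log_add_taylorWithinEval k (by linarith) (by linarith) (uniqueDiffOn_uIcc hx.ne')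
    Set.left_mem_uIcc]
  simp only [logGammaRatio, zero_add] at htaylor
  linarith

theorem stmt_6 (a b c : ℝ) (ha : 0 < a) (hb : 0 < b) (hc : 0 < c)
    (hab : b < a) (hcge : Real.Gamma b / Real.Gamma a ≤ c)
    (k : ℕ) (hk : 1 ≤ k) :
    ∀ x : ℝ, 0 < x → 0 < H a b c k x :=
  stmt_6_general a b c hb hab hcge k
end
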